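/- Let s = (J−1)/2 and t = (K−1)/2, let h'(i,j) = h(J−1−i, K−1−j) be the coordinate-reversed PSF with extended form h'_e, and let Ĥ' be the two-dimensional DFT of h'_e. Suppose g : ZMod M × ZMod N → ℂ satisfies Ĝ(u,v) = F̂(u,v) · Ĥ'(u,v) · exp(2πi·v·t/N) · exp(2πi·u·s/M) for every (u,v), where F̂, Ĝ are the two-dimensional DFTs of f, g. Then for all (m,n), g(m,n) = Σ_{i=0}^{J−1} Σ_{j=0}^{K−1} h(i,j) · f(m − s + i, n − t + j) (indices modulo M and N respectively); that is, the spatial-domain convolution corresponding to this modified frequency-domain formula satisfies the symmetric property and its PSF is the original h. -/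

import Mathlib

/-- The two-dimensional discrete Fourier transform of `z : ZMod M × ZMod N → ℂ`:
`Ẑ(u,v) = Σ_{m=0}^{M−1} Σ_{n=0}^{N−1} z(m,n) · exp(−2πi·u·m/M) · exp(−2πi·v·n/N)`. -/
noncomputable def dft2 {M N : ℕ} [NeZero M] [NeZero N]
    (z : ZMod M × ZMod N → ℂ) (u : ZMod M) (v : ZMod N) : ℂ :=
  ∑ m : ZMod M, ∑ n : ZMod N,
    z (m, n) * Complex.exp (-2 * Real.pi * Complex.I * (u.val : ℂ) * (m.val : ℂ) / (M : ℂ))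
      * Complex.exp (-2 * Real.pi * Complex.I * (v.val : ℂ) * (n.val : ℂ) / (N : ℂ))

/-! With `e(x) = exp(2πix)`, the DFT turns the correlation `p ↦ ∑ h(i,j) f(p + (i - s, j - t))`
into multiplication of `F̂` by `∑ h(i,j) e((i - s)u/M) e((j - t)v/N)`. Since `J = 2s + 1`,
reversing the indices of `h` sends `i` to `2s - i`, so this factor is exactly
`Ĥ'(u,v) e(us/M) e(vt/N)`. Hence `g` and the correlation have the same DFT, and the
two-dimensional DFT is injective. -/

open Finset Complex ZMod
open scoped Real

section
variable {M N : ℕ} [NeZero M] [NeZero N]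

lemma cexp_two_pi_I_mul_natCast_mul_div (a b : ℕ) :
    exp (2 * π * I * a * b / N) = stdAddChar ((a : ZMod N) * (b : ZMod N)) := by
  rw [show (a : ZMod N) * b = ((a * b : ℤ) : ZMod N) by push_cast; rfl, stdAddChar_coe]
  push_cast
  ring_nf

lemma cexp_neg_two_pi_I_mul_natCast_mul_div (a b : ℕ) :
    exp (-2 * π * I * a * b / N) = stdAddChar (-((a : ZMod N) * (b : ZMod N))) := by
  rw [show -((a : ZMod N) * b) = ((-(a * b) : ℤ) : ZMod N) by push_cast; rfl, stdAddChar_coe]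
  push_cast
  ring_nf

lemma dft2_eq_sum_stdAddChar (z : ZMod M × ZMod N → ℂ) (u : ZMod M) (v : ZMod N) :
    dft2 z u v = ∑ m, ∑ n, stdAddChar (-(m * u)) * stdAddChar (-(n * v)) * z (m, n) := by
  refine sum_congr rfl fun m _ ↦ sum_congr rfl fun n _ ↦ ?_
  rw [cexp_neg_two_pi_I_mul_natCast_mul_div, cexp_neg_two_pi_I_mul_natCast_mul_div]
  simp only [natCast_zmod_val, mul_comm u, mul_comm v]
  ring

lemma dft2_eq_dft_dft (z : ZMod M × ZMod N → ℂ) (u : ZMod M) (v : ZMod N) :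
    dft2 z u v = 𝓕 (fun m ↦ 𝓕 (fun n ↦ z (m, n)) v) u := by
  simp only [dft2_eq_sum_stdAddChar, dft_apply, smul_eq_mul, mul_sum, mul_assoc]

lemma dft2_injective :
    Function.Injective (dft2 : (ZMod M × ZMod N → ℂ) → ZMod M → ZMod N → ℂ) := by
  intro z w hzw
  have hrows (v : ZMod N) :
      (fun m ↦ 𝓕 (fun n ↦ z (m, n)) v) = fun m ↦ 𝓕 (fun n ↦ w (m, n)) v :=
    dft.injective <| funext fun u ↦ by simpa only [dft2_eq_dft_dft] using congrFun₂ hzw u v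
  funext ⟨m, n⟩
  exact congrFun (dft.injective <| funext fun v ↦ congrFun (hrows v) m) n

lemma dft2_comp_add (f : ZMod M × ZMod N → ℂ) (a : ZMod M) (b : ZMod N) (u : ZMod M) (v : ZMod N) :
    dft2 (fun p ↦ f (p.1 + a, p.2 + b)) u v = stdAddChar (a * u) * stdAddChar (b * v) * dft2 f u v := by
  simp only [dft2_eq_sum_stdAddChar, mul_sum]
  refine Fintype.sum_equiv (Equiv.addRight a) _ _ fun m ↦ ?_
  refine Fintype.sum_equiv (Equiv.addRight b) _ _ fun n ↦ ?_
  have hm : -(m * u) = a * u + -((m + a) * u) := by ring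
  have hn : -(n * v) = b * v + -((n + b) * v) := by ring
  rw [Equiv.coe_addRight, Equiv.coe_addRight, hm, hn, AddChar.map_add_eq_mul, AddChar.map_add_eq_mul]
  ring

lemma dft2_sum_mul_comp_add {ι : Type*} [Fintype ι] (f : ZMod M × ZMod N → ℂ) (w : ι → ℂ)
    (a : ι → ZMod M) (b : ι → ZMod N) (u : ZMod M) (v : ZMod N) :
    dft2 (fun p ↦ ∑ k, w k * f (p.1 + a k, p.2 + b k)) u v
      = dft2 f u v * ∑ k, w k * stdAddChar (a k * u) * stdAddChar (b k * v) := by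
  have hlin : dft2 (fun p ↦ ∑ k, w k * f (p.1 + a k, p.2 + b k)) u v
      = ∑ k, w k * dft2 (fun p ↦ f (p.1 + a k, p.2 + b k)) u v := by
    simp only [dft2_eq_sum_stdAddChar, mul_sum]
    symm
    rw [Finset.sum_comm]
    refine sum_congr rfl fun m _ ↦ ?_
    rw [Finset.sum_comm]
    exact sum_congr rfl fun n _ ↦ sum_congr rfl fun k _ ↦ by ring
  rw [hlin, mul_sum]
  exact sum_congr rfl fun k _ ↦ by rw [dft2_comp_add]; ring

def extendByZero {J K : ℕ} (k : Fin J × Fin K → ℂ) : ZMod M × ZMod N → ℂ :=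
  fun p ↦ if hp : p.1.val < J ∧ p.2.val < K then k (⟨p.1.val, hp.1⟩, ⟨p.2.val, hp.2⟩) else 0

lemma dft2_extendByZero {J K : ℕ} (hJ : J ≤ M) (hK : K ≤ N) (k : Fin J × Fin K → ℂ)
    (u : ZMod M) (v : ZMod N) :
    dft2 (extendByZero k) u v = ∑ i : Fin J, ∑ j : Fin K,
      stdAddChar (-(((i : ℕ) : ZMod M) * u)) * stdAddChar (-(((j : ℕ) : ZMod N) * v)) * k (i, j) := by
  have hval_i (i : Fin J) : ((i : ℕ) : ZMod M).val = i := val_natCast_of_lt (i.2.trans_le hJ)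
  have hval_j (j : Fin K) : ((j : ℕ) : ZMod N).val = j := val_natCast_of_lt (j.2.trans_le hK)
  rw [dft2_eq_sum_stdAddChar, ← Fintype.sum_prod_type', ← Fintype.sum_prod_type']
  refine (Fintype.sum_of_injective (fun ij ↦ (((ij.1 : ℕ) : ZMod M), ((ij.2 : ℕ) : ZMod N)))
    ?_ _ _ ?_ fun ij ↦ ?_).symm
  · rintro ⟨i, j⟩ ⟨i', j'⟩ h
    simp only [Prod.mk.injEq] at h
    ext
    · simpa only [hval_i] using congrArg ZMod.val h.1
    · simpa only [hval_j] using congrArg ZMod.val h.2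
  · rintro ⟨m, n⟩ hmn
    rw [extendByZero, dif_neg, mul_zero]
    rintro ⟨hm, hn⟩
    exact hmn ⟨(⟨m.val, hm⟩, ⟨n.val, hn⟩), by simp only [natCast_zmod_val]⟩
  · simp only [extendByZero, hval_i, hval_j, Fin.is_lt, and_self, dif_pos, Fin.eta]

lemma stdAddChar_natCast_rev_sub_mul {s : ℕ} (i : Fin (2 * s + 1)) (u : ZMod M) :
    stdAddChar ((((i.rev : ℕ) : ZMod M) - (s : ZMod M)) * u)
      = stdAddChar (-(((i : ℕ) : ZMod M) * u)) * stdAddChar (u * (s : ZMod M)) := by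
  have hrev := congrArg (Nat.cast : ℕ → ZMod M) (Fin.rev_add_cast i)
  push_cast at hrev
  rw [← AddChar.map_add_eq_mul]
  congr 1
  linear_combination u * hrev

lemma dft2_extendByZero_rev_mul_stdAddChar_mul_stdAddChar {s t : ℕ} (hJ : 2 * s + 1 ≤ M)
    (hK : 2 * t + 1 ≤ N) (h : Fin (2 * s + 1) × Fin (2 * t + 1) → ℂ) (u : ZMod M) (v : ZMod N) :
    dft2 (extendByZero fun ij ↦ h (ij.1.rev, ij.2.rev)) u v * stdAddChar (v * (t : ZMod N))
        * stdAddChar (u * (s : ZMod M))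
      = ∑ ij, h ij * stdAddChar ((((ij.1 : ℕ) : ZMod M) - (s : ZMod M)) * u)
          * stdAddChar ((((ij.2 : ℕ) : ZMod N) - (t : ZMod N)) * v) := by
  rw [dft2_extendByZero hJ hK, mul_assoc, ← Fintype.sum_prod_type', sum_mul]
  refine Fintype.sum_equiv (Fin.revPerm.prodCongr Fin.revPerm) _ _ fun ⟨i, j⟩ ↦ ?_
  rw [Equiv.prodCongr_apply, Prod.map_apply, Fin.revPerm_apply, Fin.revPerm_apply,
    stdAddChar_natCast_rev_sub_mul, stdAddChar_natCast_rev_sub_mul]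
  ring

end

/-- With `s = (J−1)/2`, `t = (K−1)/2`, coordinate-reversed PSF
`h'(i,j) = h(J−1−i, K−1−j)` with extended form `h'_e` and 2-D DFT `Ĥ'`, if
`Ĝ(u,v) = F̂(u,v)·Ĥ'(u,v)·exp(2πi·v·t/N)·exp(2πi·u·s/M)` for all `(u,v)`, then the
spatial-domain convolution satisfies the symmetric property with the original PSF:
`g(m,n) = Σ_i Σ_j h(i,j)·f(m−s+i, n−t+j)`. -/
theorem modified_frequency_formula_2d_original_psf
    (M N J K : ℕ) [NeZero M] [NeZero N]
    (hJodd : Odd J) (hKodd : Odd K) (hJM : J < M) (hKN : K < N)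
    (f : ZMod M × ZMod N → ℂ) (h : Fin J × Fin K → ℂ)
    (h' : Fin J × Fin K → ℂ)
    (hh' : ∀ (i : Fin J) (j : Fin K),
      h' (i, j) = h (⟨J - 1 - i.val, by rcases hJodd with ⟨c, hc⟩; have := i.isLt; omega⟩,
                     ⟨K - 1 - j.val, by rcases hKodd with ⟨c, hc⟩; have := j.isLt; omega⟩))
    (he' : ZMod M × ZMod N → ℂ)
    (hhe' : ∀ (m : ZMod M) (n : ZMod N),
      he' (m, n) = if hmn : m.val < J ∧ n.val < K
        then h' (⟨m.val, hmn.1⟩, ⟨n.val, hmn.2⟩) else 0)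
    (s t : ℕ) (hs : s = (J - 1) / 2) (ht : t = (K - 1) / 2)
    (g : ZMod M × ZMod N → ℂ)
    (hfreq : ∀ (u : ZMod M) (v : ZMod N),
      dft2 g u v = dft2 f u v * dft2 he' u v *
        Complex.exp (2 * Real.pi * Complex.I * (v.val : ℂ) * (t : ℂ) / (N : ℂ)) *
        Complex.exp (2 * Real.pi * Complex.I * (u.val : ℂ) * (s : ℂ) / (M : ℂ))) :
    ∀ (m : ZMod M) (n : ZMod N),
      g (m, n) = ∑ i : Fin J, ∑ j : Fin K,
        h (i, j) * f (m - (s : ZMod M) + ((i.val : ℕ) : ZMod M),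
                      n - (t : ZMod N) + ((j.val : ℕ) : ZMod N)) := by
  obtain rfl : J = 2 * s + 1 := by obtain ⟨c, rfl⟩ := hJodd; omega
  obtain rfl : K = 2 * t + 1 := by obtain ⟨c, rfl⟩ := hKodd; omega
  have he'_eq : he' = extendByZero fun ij ↦ h (ij.1.rev, ij.2.rev) := by
    funext ⟨m, n⟩
    rw [hhe', extendByZero]
    split_ifs with hmn
    · rw [hh']
      congr 2 <;> ext <;> simp only [Fin.val_rev] <;> omega
    · rfl
  set correlation : ZMod M × ZMod N → ℂ := fun p ↦ ∑ ij : Fin (2 * s + 1) × Fin (2 * t + 1),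
    h ij * f (p.1 + (((ij.1 : ℕ) : ZMod M) - s), p.2 + (((ij.2 : ℕ) : ZMod N) - t))
  have hdft : dft2 g = dft2 correlation := by
    funext u v
    rw [hfreq, dft2_sum_mul_comp_add, he'_eq, cexp_two_pi_I_mul_natCast_mul_div,
      cexp_two_pi_I_mul_natCast_mul_div, natCast_zmod_val, natCast_zmod_val, mul_assoc (dft2 f u v),
      mul_assoc (dft2 f u v), dft2_extendByZero_rev_mul_stdAddChar_mul_stdAddChar hJM.le hKN.le]
  intro m n
  rw [congrFun (dft2_injective hdft) (m, n)]
  simp only [correlation, Fintype.sum_prod_type, ← add_sub_assoc, sub_add_eq_add_sub]
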